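/- arXiv:1709.09790 — 2 statements merged into one kernel-verified Lean document; each statement's English description precedes it below -/
import Mathlib

section
/- Let R be a discrete valuation ring whose fraction field F has characteristic different from 2 and 3, let D ∈ R be nonzero, let S = R[t]/(t² − D) and K = F[t]/(t² − D), and assume S is the integral closure of R in K (i.e., S is the maximal order in K). If two binary cubic forms over R of discriminant 4D are SL₂(F)-equivalent when regarded as forms over F, then they are SL₂(R)-equivalent; equivalently, every SL₂(F)-orbit of binary cubic forms of discriminant 4D contains at most one SL₂(R)-orbit of forms with coefficients in R. -/
/-- A binary cubic form `a x³ + 3b x²y + 3c xy² + d y³` over a commutative ring,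
recorded by its coefficient quadruple `(a, b, c, d)`. -/
structure BinaryCubic (R : Type*) [CommRing R] where
  a : R
  b : R
  c : R
  d : R

namespace BinaryCubic

variable {R : Type*} [CommRing R]

/-- Evaluation of the binary cubic form `a x³ + 3b x²y + 3c xy² + d y³`. -/
def eval (f : BinaryCubic R) (x y : R) : R :=
  f.a * x ^ 3 + 3 * f.b * x ^ 2 * y + 3 * f.c * x * y ^ 2 + f.d * y ^ 3

/-- The discriminant `a²d² − 3b²c² + 4ac³ + 4b³d − 6abcd` of a binary cubic form. -/
def disc (f : BinaryCubic R) : R :=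
  f.a ^ 2 * f.d ^ 2 - 3 * f.b ^ 2 * f.c ^ 2 + 4 * f.a * f.c ^ 3 + 4 * f.b ^ 3 * f.d
    - 6 * f.a * f.b * f.c * f.d

/-- The action of a 2×2 matrix `g = (p q; r s)` on binary cubic forms by linear change of
variables: `(g · f)(x, y) = f (p x + q y) (r x + s y)`, written out on coefficients. -/
def act (g : Matrix (Fin 2) (Fin 2) R) (f : BinaryCubic R) : BinaryCubic R where
  a := f.a * g 0 0 ^ 3 + 3 * f.b * g 0 0 ^ 2 * g 1 0 + 3 * f.c * g 0 0 * g 1 0 ^ 2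
      + f.d * g 1 0 ^ 3
  b := f.a * g 0 0 ^ 2 * g 0 1
      + f.b * (g 0 0 ^ 2 * g 1 1 + 2 * g 0 0 * g 0 1 * g 1 0)
      + f.c * (2 * g 0 0 * g 1 0 * g 1 1 + g 0 1 * g 1 0 ^ 2)
      + f.d * g 1 0 ^ 2 * g 1 1
  c := f.a * g 0 0 * g 0 1 ^ 2
      + f.b * (g 0 1 ^ 2 * g 1 0 + 2 * g 0 0 * g 0 1 * g 1 1)
      + f.c * (g 0 0 * g 1 1 ^ 2 + 2 * g 0 1 * g 1 0 * g 1 1)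
      + f.d * g 1 0 * g 1 1 ^ 2
  d := f.a * g 0 1 ^ 3 + 3 * f.b * g 0 1 ^ 2 * g 1 1 + 3 * f.c * g 0 1 * g 1 1 ^ 2
      + f.d * g 1 1 ^ 3

/-- Sanity check: `act` really is the linear change of variables. -/
theorem eval_act (g : Matrix (Fin 2) (Fin 2) R) (f : BinaryCubic R) (x y : R) :
    (act g f).eval x y = f.eval (g 0 0 * x + g 0 1 * y) (g 1 0 * x + g 1 1 * y) := by
  simp only [eval, act]; ring

/-- Two binary cubic forms over `R` are `SL₂(R)`-equivalent if they are related by a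
determinant-one linear change of variables. -/
def SLEquiv (f f' : BinaryCubic R) : Prop :=
  ∃ g : Matrix (Fin 2) (Fin 2) R, g.det = 1 ∧ act g f = f'

/-- Scalar multiplication of a binary cubic form (multiplying all coefficients). -/
def smul (r : R) (f : BinaryCubic R) : BinaryCubic R :=
  ⟨r * f.a, r * f.b, r * f.c, r * f.d⟩

/-- The scaled Hessian `h_f(x,y) = (b²−ac)x² + (bc−ad)xy + (c²−bd)y²` of a binary cubic form. -/
def hess (f : BinaryCubic R) (x y : R) : R :=
  (f.b ^ 2 - f.a * f.c) * x ^ 2 + (f.b * f.c - f.a * f.d) * x * y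
    + (f.c ^ 2 - f.b * f.d) * y ^ 2

/-- The Jacobian covariant `g_f = f_x · (h_f)_y − f_y · (h_f)_x` of a binary cubic form,
written out as a function of `x` and `y`. -/
def gcov (f : BinaryCubic R) (x y : R) : R :=
  (3 * f.a * x ^ 2 + 6 * f.b * x * y + 3 * f.c * y ^ 2)
      * ((f.b * f.c - f.a * f.d) * x + 2 * (f.c ^ 2 - f.b * f.d) * y)
    - (3 * f.b * x ^ 2 + 6 * f.c * x * y + 3 * f.d * y ^ 2)
      * (2 * (f.b ^ 2 - f.a * f.c) * x + (f.b * f.c - f.a * f.d) * y)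

/-- A binary cubic form over a field is reducible if it factors as a homogeneous linear form
times a homogeneous quadratic form over the field. -/
def Reducible {F : Type*} [Field F] (f : BinaryCubic F) : Prop :=
  ∃ l₁ l₂ q₁ q₂ q₃ : F, ∀ x y : F,
    f.eval x y = (l₁ * x + l₂ * y) * (q₁ * x ^ 2 + q₂ * x * y + q₃ * y ^ 2)

/-- Coefficientwise image of a binary cubic form under a ring homomorphism. -/
def map {R S : Type*} [CommRing R] [CommRing S] (φ : R →+* S) (f : BinaryCubic R) :
    BinaryCubic S :=
  ⟨φ f.a, φ f.b, φ f.c, φ f.d⟩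

end BinaryCubic


/-! By the Cartan decomposition `SL₂(F) = SL₂(R) · diag(r⁻¹, r) · SL₂(R)` (valid over any
valuation ring `R`), one may assume that the `SL₂(F)`-equivalence is `diag(r⁻¹, r)` with `r ∈ R`,
carrying an integral form `f` to an integral form `g` with `g.c = r f.c`, `g.d = r³ f.d`.
Since `disc g = Q² − 4H` with `Q = bc − ad` and `H = (b² − ac)(c² − bd)` (coefficients of `g`),
`r ∣ Q` and `r² ∣ H`, so `(Q + 2√D) / (2r)` is a root of a monic quadratic over `R`. It lies in
`S = R[√D]` by maximality, and comparing `√D`-coordinates forces `r` to be a unit. -/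

namespace BinaryCubic

variable {R : Type*} [CommRing R]

@[ext] theorem ext {f g : BinaryCubic R} (ha : f.a = g.a) (hb : f.b = g.b) (hc : f.c = g.c)
    (hd : f.d = g.d) : f = g := by
  cases f; cases g; simp_all

theorem act_mul (M N : Matrix (Fin 2) (Fin 2) R) (f : BinaryCubic R) :
    act (M * N) f = act N (act M f) := by
  ext <;> simp [act, Matrix.mul_apply, Fin.sum_univ_two] <;> ring

theorem act_smul_one (u : R) (f : BinaryCubic R) : act (u • 1) f = smul (u ^ 3) f := by
  ext <;> simp [act, smul] <;> ring

theorem act_adjugate_act {M : Matrix (Fin 2) (Fin 2) R} (hM : M.det = 1) (f : BinaryCubic R) :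
    act M.adjugate (act M f) = f := by
  rw [← act_mul, Matrix.mul_adjugate, hM, act_smul_one]
  ext <;> simp [smul]

theorem act_diag (p s : R) (f : BinaryCubic R) :
    act !![p, 0; 0, s] f = ⟨f.a * p ^ 3, f.b * p ^ 2 * s, f.c * p * s ^ 2, f.d * s ^ 3⟩ := by
  ext <;> simp [act] <;> ring

theorem disc_act (M : Matrix (Fin 2) (Fin 2) R) (f : BinaryCubic R) :
    (act M f).disc = M.det ^ 6 * f.disc := by
  simp only [disc, act, Matrix.det_fin_two]
  ring

theorem map_act {S : Type*} [CommRing S] (φ : R →+* S) (M : Matrix (Fin 2) (Fin 2) R)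
    (f : BinaryCubic R) : (act M f).map φ = act (M.map φ) (f.map φ) := by
  ext <;> simp [act, map, map_ofNat]

theorem map_injective {S : Type*} [CommRing S] {φ : R →+* S} (hφ : Function.Injective φ) :
    Function.Injective (map φ) := by
  intro f g h
  simp only [map, mk.injEq] at h
  ext
  exacts [hφ h.1, hφ h.2.1, hφ h.2.2.1, hφ h.2.2.2]

end BinaryCubic

namespace Matrix

variable {R : Type*} [CommRing R]

def HasSmithForm (N : Matrix (Fin 2) (Fin 2) R) : Prop :=
  ∃ (P Q : Matrix (Fin 2) (Fin 2) R) (d₁ d₂ : R),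
    P.det = 1 ∧ Q.det = 1 ∧ d₁ ∣ d₂ ∧ N = P * !![d₁, 0; 0, d₂] * Q

theorem hasSmithForm_of_dvd {N : Matrix (Fin 2) (Fin 2) R} (h : ∀ k l, N 0 0 ∣ N k l) :
    N.HasSmithForm := by
  obtain ⟨u, hu⟩ := h 1 0
  obtain ⟨v, hv⟩ := h 0 1
  refine ⟨!![1, 0; u, 1], !![1, v; 0, 1], N 0 0, N 1 1 - u * N 0 1, by simp, by simp,
    dvd_sub (h 1 1) (dvd_mul_of_dvd_right (h 0 1) u), ?_⟩
  ext i j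
  fin_cases i <;> fin_cases j <;> simp [hu, hv] <;> ring

theorem HasSmithForm.of_mul_right {N : Matrix (Fin 2) (Fin 2) R}
    (h : (N * !![0, 1; -1, 0]).HasSmithForm) : N.HasSmithForm := by
  obtain ⟨P, Q, d₁, d₂, hP, hQ, hd, hN⟩ := h
  refine ⟨P, Q * !![0, -1; 1, 0], d₁, d₂, hP, by rw [det_mul]; simp [hQ], hd, ?_⟩
  rw [← Matrix.mul_assoc, ← hN, Matrix.mul_assoc,
    show !![0, 1; -1, 0] * !![0, -1; 1, 0] = (1 : Matrix (Fin 2) (Fin 2) R) by simp [one_fin_two],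
    Matrix.mul_one]

theorem HasSmithForm.of_mul_left {N : Matrix (Fin 2) (Fin 2) R}
    (h : (!![0, 1; -1, 0] * N).HasSmithForm) : N.HasSmithForm := by
  obtain ⟨P, Q, d₁, d₂, hP, hQ, hd, hN⟩ := h
  refine ⟨!![0, -1; 1, 0] * P, Q, d₁, d₂, by rw [det_mul]; simp [hP], hQ, hd, ?_⟩
  rw [Matrix.mul_assoc, Matrix.mul_assoc, ← Matrix.mul_assoc P, ← hN, ← Matrix.mul_assoc,
    show !![0, -1; 1, 0] * !![0, 1; -1, 0] = (1 : Matrix (Fin 2) (Fin 2) R) by simp [one_fin_two],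
    Matrix.one_mul]

theorem hasSmithForm_of_entry_dvd {N : Matrix (Fin 2) (Fin 2) R} :
    ∀ i j, (∀ k l, N i j ∣ N k l) → N.HasSmithForm
  | 0, 0, h => hasSmithForm_of_dvd h
  | 0, 1, h => .of_mul_right <| hasSmithForm_of_dvd fun k l => by
    fin_cases k <;> fin_cases l <;> simp [mul_apply, Fin.sum_univ_two, h]
  | 1, 0, h => .of_mul_left <| hasSmithForm_of_dvd fun k l => by
    fin_cases k <;> fin_cases l <;> simp [mul_apply, Fin.sum_univ_two, h]
  | 1, 1, h => .of_mul_left <| .of_mul_right <| hasSmithForm_of_dvd fun k l => by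
    fin_cases k <;> fin_cases l <;> simp [mul_apply, vecMul, dotProduct, Fin.sum_univ_two, h]

end Matrix

theorem Finset.exists_dvd_forall {R ι : Type*} [CommMonoid R] [PreValuationRing R] {s : Finset ι}
    (hs : s.Nonempty) (f : ι → R) : ∃ i ∈ s, ∀ j ∈ s, f i ∣ f j := by
  induction hs using Finset.Nonempty.cons_induction with
  | singleton i => exact ⟨i, by simp⟩
  | cons j s hj _ ih =>
    obtain ⟨i, hi, hdvd⟩ := ih
    rcases ValuationRing.dvd_total (f i) (f j) with h | h
    · exact ⟨i, by simp [hi], by simpa [h] using hdvd⟩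
    · exact ⟨j, by simp, by simpa using fun k hk => h.trans (hdvd k hk)⟩

theorem Matrix.hasSmithForm {R : Type*} [CommRing R] [PreValuationRing R]
    (N : Matrix (Fin 2) (Fin 2) R) : N.HasSmithForm := by
  obtain ⟨⟨i, j⟩, -, h⟩ :=
    Finset.exists_dvd_forall Finset.univ_nonempty fun p : Fin 2 × Fin 2 => N p.1 p.2
  exact hasSmithForm_of_entry_dvd i j fun k l => h (k, l) (Finset.mem_univ _)

theorem Matrix.exists_cartan_decomposition {R F : Type*} [CommRing R] [IsDomain R]
    [ValuationRing R] [Field F] [Algebra R F] [IsFractionRing R F]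
    (M : Matrix (Fin 2) (Fin 2) F) (hM : M.det = 1) :
    ∃ (A B : Matrix (Fin 2) (Fin 2) R) (r : R), r ≠ 0 ∧ A.det = 1 ∧ B.det = 1 ∧
      M = A.map (algebraMap R F) * !![(algebraMap R F r)⁻¹, 0; 0, algebraMap R F r] *
        B.map (algebraMap R F) := by
  set φ := algebraMap R F
  have hφ : Function.Injective φ := IsFractionRing.injective R F
  obtain ⟨b, hb⟩ := IsLocalization.exist_integer_multiples_of_finite (nonZeroDivisors R)
    fun p : Fin 2 × Fin 2 => M p.1 p.2
  choose n hn using hb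
  set N : Matrix (Fin 2) (Fin 2) R := Matrix.of fun i j => n (i, j)
  have hb0 : (b : R) ≠ 0 := nonZeroDivisors.ne_zero b.2
  have hNM : N.map φ = φ b • M := by
    ext i j
    simp [N, hn (i, j), Algebra.smul_def, φ]
  have hdetN : N.det = b ^ 2 := hφ <| by
    rw [RingHom.map_det, RingHom.mapMatrix_apply, hNM, det_smul, hM]
    simp
  obtain ⟨P, Q, d₁, d₂, hP, hQ, ⟨e, rfl⟩, hPQ⟩ := N.hasSmithForm
  have hdet : d₁ * (d₁ * e) = b ^ 2 := by
    simpa [hPQ, hP, hQ] using hdetN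
  -- `(d₂ / b)² = e`, so `d₂ / b` is integral over `R`
  obtain ⟨r, hr⟩ : (b : R) ∣ d₁ * e := by
    rw [← IsIntegrallyClosed.pow_dvd_pow_iff two_ne_zero]
    exact ⟨e, by linear_combination e * hdet⟩
  have hd₁ : d₁ * r = b := mul_left_cancel₀ hb0 (by linear_combination hdet - d₁ * hr)
  have hr0 : r ≠ 0 := by
    rintro rfl
    exact hb0 (by simpa using hd₁.symm)
  have hφr : φ r ≠ 0 := (map_ne_zero_iff φ hφ).mpr hr0
  refine ⟨P, Q, r, hr0, hP, hQ, smul_right_injective _ ((map_ne_zero_iff φ hφ).mpr hb0) ?_⟩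
  dsimp only
  rw [← hNM, hPQ, hr, Matrix.map_mul, Matrix.map_mul, ← Matrix.smul_mul, ← Matrix.mul_smul]
  congr 2
  ext i j
  fin_cases i <;> fin_cases j <;> simp [← hd₁, hφr]

open Polynomial

theorem IsIntegrallyClosed.dvd_of_sq_eq {S : Type*} [CommRing S] [IsIntegrallyClosed S]
    {m n q k : S} (hm : m ∈ nonZeroDivisors S) (h : n ^ 2 = q * n * m - k * m ^ 2) : m ∣ n := by
  set ι := algebraMap S (FractionRing S)
  set x := IsLocalization.mk' (FractionRing S) n ⟨m, hm⟩
  have hx : x * ι m = ι n := IsLocalization.mk'_spec _ n ⟨m, hm⟩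
  have hmu : IsUnit (ι m ^ 2) := (IsLocalization.map_units _ (⟨m, hm⟩ : nonZeroDivisors S)).pow 2
  have hint : IsIntegral S x := by
    refine ⟨X ^ 2 - C q * X + C k, by monicity!, ?_⟩
    refine (hmu.mul_left_eq_zero).mp ?_
    have := congrArg ι h
    simp only [map_pow, map_mul, map_sub, ← hx] at this
    simp only [eval₂_add, eval₂_sub, eval₂_mul, eval₂_pow, eval₂_X, eval₂_C]
    linear_combination this
  obtain ⟨y, hy⟩ := IsIntegrallyClosed.isIntegral_iff.mp hint
  exact ⟨y, IsFractionRing.injective S (FractionRing S) (by rw [map_mul, hy, ← hx, mul_comm])⟩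

theorem algebraMap_mem_nonZeroDivisors_of_ne_zero {R S : Type*} [CommRing R] [IsDomain R]
    [CommRing S] [Algebra R S] [Module.IsTorsionFree R S] {z : R} (hz : z ≠ 0) :
    algebraMap R S z ∈ nonZeroDivisors S :=
  mem_nonZeroDivisors_iff_right.mpr fun s hs => by
    rwa [mul_comm, ← Algebra.smul_def, smul_eq_zero_iff_right hz] at hs

namespace AdjoinRoot

variable {R : Type*} [CommRing R] (D : R)

theorem root_X_sq_sub_C_sq : root (X ^ 2 - C D) ^ 2 = algebraMap R _ D := by
  have h := eval₂_root (X ^ 2 - C D)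
  rwa [eval₂_sub, eval₂_X_pow, eval₂_C, sub_eq_zero, ← algebraMap_eq] at h

theorem dvd_of_algebraMap_add_mul_root_eq [Nontrivial R] {x y v : R}
    {s : AdjoinRoot (X ^ 2 - C D)}
    (h : algebraMap R _ x + algebraMap R _ y * root (X ^ 2 - C D) = algebraMap R _ v * s) :
    v ∣ y := by
  have hmon : (X ^ 2 - C D).Monic := monic_X_pow_sub_C D two_ne_zero
  have hlin : algebraMap R _ x + algebraMap R _ y * root (X ^ 2 - C D) = mk _ (C x + C y * X) := by
    simp [algebraMap_eq]
  have hmod : (C x + C y * X) %ₘ (X ^ 2 - C D) = C x + C y * X := by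
    rw [modByMonic_eq_self_iff hmon, degree_X_pow_sub_C two_pos]
    compute_degree!
  rw [hlin, ← Algebra.smul_def] at h
  have h1 := congrArg (fun t => (modByMonicHom hmon t).coeff 1) h
  simp only [modByMonicHom_mk, hmod, map_smul, coeff_smul, smul_eq_mul] at h1
  exact ⟨_, by simpa using h1⟩

end AdjoinRoot

theorem BinaryCubic.isUnit_of_dvd_c_of_dvd_d {R : Type*} [CommRing R] [IsDomain R] {D : R}
    [IsIntegrallyClosed (AdjoinRoot (X ^ 2 - C D))] (h2 : (2 : R) ≠ 0) {f : BinaryCubic R}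
    (hf : f.disc = 4 * D) {r : R} (hr : r ≠ 0) (hc : r ∣ f.c) (hd : r ^ 3 ∣ f.d) : IsUnit r := by
  obtain ⟨c, hc⟩ := hc
  obtain ⟨d, hd⟩ := hd
  set q := f.b * c - f.a * d * r ^ 2
  set k := (f.b ^ 2 - f.a * c * r) * (c ^ 2 - f.b * d * r)
  have hqk : r ^ 2 * q ^ 2 = 4 * D + 4 * r ^ 2 * k := by
    rw [disc, hc, hd] at hf
    linear_combination hf
  have := (monic_X_pow_sub_C D two_ne_zero).free_adjoinRoot
  set ι := algebraMap R (AdjoinRoot (X ^ 2 - C D))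
  obtain ⟨s, hs⟩ : ι (2 * r) ∣ ι (r * q) + ι 2 * AdjoinRoot.root (X ^ 2 - C D) := by
    refine IsIntegrallyClosed.dvd_of_sq_eq (q := ι q) (k := ι k)
      (algebraMap_mem_nonZeroDivisors_of_ne_zero (mul_ne_zero h2 hr)) ?_
    have hqk' := congrArg ι hqk
    simp only [map_mul, map_add, map_pow, map_ofNat] at hqk' ⊢
    linear_combination 4 * AdjoinRoot.root_X_sq_sub_C_sq D - hqk'
  obtain ⟨t, ht⟩ := AdjoinRoot.dvd_of_algebraMap_add_mul_root_eq D hs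
  exact IsUnit.of_mul_eq_one t (mul_left_cancel₀ h2 (by linear_combination -ht))

theorem BinaryCubic.isUnit_of_act_diag_eq_map {R F : Type*} [CommRing R] [IsDomain R] {D : R}
    [IsIntegrallyClosed (AdjoinRoot (X ^ 2 - C D))] (h2 : (2 : R) ≠ 0) [Field F] [Algebra R F]
    [IsFractionRing R F] {f g : BinaryCubic R} (hg : g.disc = 4 * D) {r : R} (hr : r ≠ 0)
    (h : act !![(algebraMap R F r)⁻¹, 0; 0, algebraMap R F r] (f.map (algebraMap R F)) =
      g.map (algebraMap R F)) : IsUnit r := by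
  have hφ := IsFractionRing.injective R F
  have hφr : algebraMap R F r ≠ 0 := (map_ne_zero_iff _ hφ).mpr hr
  rw [act_diag] at h
  simp only [map, mk.injEq] at h
  refine isUnit_of_dvd_c_of_dvd_d h2 hg hr ⟨f.c, hφ ?_⟩ ⟨f.d, hφ ?_⟩
  · rw [← h.2.2.1, map_mul]
    field_simp
  · rw [← h.2.2.2, map_mul, map_pow, mul_comm]

open BinaryCubic

open Polynomial in
theorem slEquiv_of_fractionField_slEquiv_general {R : Type*} [CommRing R] [IsDomain R]
    [IsDiscreteValuationRing R]
    (h2 : (2 : FractionRing R) ≠ 0)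
    (D : R)
    (hmax : IsIntegrallyClosed (AdjoinRoot (X ^ 2 - C D)))
    (f g : BinaryCubic R)
    (hg : BinaryCubic.disc g = 4 * D)
    (hFG : BinaryCubic.SLEquiv (f.map (algebraMap R (FractionRing R)))
      (g.map (algebraMap R (FractionRing R)))) :
    BinaryCubic.SLEquiv f g := by
  obtain ⟨M, hM, hMfg⟩ := hFG
  obtain ⟨A, B, r, hr, hA, hB, rfl⟩ := M.exists_cartan_decomposition (R := R) hM
  set φ := algebraMap R (FractionRing R)
  have hφ : Function.Injective φ := IsFractionRing.injective R (FractionRing R)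
  have h2R : (2 : R) ≠ 0 := fun h => h2 (by rw [← map_ofNat φ 2, h, map_zero])
  have hadj : B.adjugate.map φ = (B.map φ).adjugate := RingHom.map_adjugate φ B
  have hfg : act !![(φ r)⁻¹, 0; 0, φ r] ((act A f).map φ) = (act B.adjugate g).map φ := by
    rw [map_act, map_act, hadj, ← hMfg, act_mul, act_mul,
      act_adjugate_act (by rw [← RingHom.mapMatrix_apply, ← RingHom.map_det, hB, map_one])]
  obtain ⟨u, rfl⟩ : IsUnit r := by
    refine isUnit_of_act_diag_eq_map (D := D) h2R ?_ hr hfg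
    rw [disc_act, Matrix.det_adjugate, hB, one_pow, one_pow, one_mul, hg]
  refine ⟨A * !![(↑u⁻¹ : R), 0; 0, (u : R)] * B, by simp [hA, hB], map_injective hφ ?_⟩
  have hu : !![(↑u⁻¹ : R), 0; 0, (u : R)].map φ = !![(φ u)⁻¹, 0; 0, φ u] := by
    ext i j
    fin_cases i <;> fin_cases j <;> simp [map_units_inv]
  rw [map_act, Matrix.map_mul, Matrix.map_mul, hu, hMfg]

open Polynomial in
/-- Let `R` be a DVR whose fraction field has characteristic ≠ 2, 3, let `D ∈ R`
be nonzero, `S = R[t]/(t² − D)`, and suppose `S` is the maximal order in `K = F[t]/(t² − D)`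
(equivalently, `S` is integrally closed, `K` being its total ring of fractions). If two binary
cubic forms over `R` of discriminant `4D` become `SL₂(F)`-equivalent over the fraction field
`F`, then they are already `SL₂(R)`-equivalent. -/
theorem slEquiv_of_fractionField_slEquiv {R : Type*} [CommRing R] [IsDomain R]
    [IsDiscreteValuationRing R]
    (h2 : (2 : FractionRing R) ≠ 0) (h3 : (3 : FractionRing R) ≠ 0)
    (D : R) (hD : D ≠ 0)
    (hmax : IsIntegrallyClosed (AdjoinRoot (X ^ 2 - C D)))
    (f g : BinaryCubic R)
    (hf : BinaryCubic.disc f = 4 * D) (hg : BinaryCubic.disc g = 4 * D)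
    (hFG : BinaryCubic.SLEquiv (f.map (algebraMap R (FractionRing R)))
      (g.map (algebraMap R (FractionRing R)))) :
    BinaryCubic.SLEquiv f g :=
  slEquiv_of_fractionField_slEquiv_general h2 D hmax f g hg hFG
end

section
/- Let F be a field of characteristic different from 2 and 3, let D ∈ F*, let K = F[t]/(t² − D) with τ the image of t, and let δ = u + vτ ∈ K* with u, v ∈ F and N_{K/F}(δ) = 1. If the binary cubic form v·x³ + 3u·x²y + 3vD·xy² + uD·y³ is reducible over F (i.e., has a linear factor over F), then δ is a cube in K*. -/
/-!
For `ξ = x + yτ` one computes `δ ξ³ = g(x, y) + f(x, y) τ`, where `f` is the given cubic form and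
`g = (u, vD, uD, vD²)` a companion form. A linear factor of `f` yields a zero `(x, y) ≠ 0`, so
`δ ξ³ = w` lies in `F`. Taking norms gives `N(ξ)³ = w²`. As `K` is reduced (`2D ≠ 0`), `ξ³ ≠ 0`,
hence `w ≠ 0` and `N(ξ) ≠ 0`; thus `ξ` is a unit and `δ = (c / ξ)³` for `c = w / N(ξ)`, since
`c³ = w³ / N(ξ)³ = w`.
-/

theorem BinaryCubic.Reducible.exists_eval_eq_zero {F : Type*} [Field F] {f : BinaryCubic F}
    (hf : f.Reducible) : ∃ x y : F, (x, y) ≠ 0 ∧ f.eval x y = 0 := by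
  obtain ⟨l₁, l₂, q₁, q₂, q₃, hf⟩ := hf
  by_cases hl : l₁ = 0 ∧ l₂ = 0
  · exact ⟨1, 0, by simp, by simp [hf, hl.1, hl.2]⟩
  · refine ⟨l₂, -l₁, fun h => hl ?_, by rw [hf]; ring⟩
    simp only [Prod.mk_eq_zero, neg_eq_zero] at h
    exact h.symm

theorem Algebra.isUnit_of_isUnit_norm {R S : Type*} [CommRing R] [CommRing S] [Algebra R S]
    [Module.Free R S] [Module.Finite R S] {x : S} (hx : IsUnit (Algebra.norm R x)) :
    IsUnit x := by
  rw [Algebra.norm_apply, ← LinearMap.isUnit_iff_isUnit_det] at hx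
  obtain ⟨y, hy⟩ := (Module.End.isUnit_iff _).mp hx |>.2 1
  exact .of_mul_eq_one y hy

theorem exists_cube_eq_of_mul_cube_eq_algebraMap {F K : Type*} [Field F] [CommRing K]
    [IsReduced K] [Algebra F K] [Module.Finite F K] (hK : Module.finrank F K = 2) {δ ξ : K}
    (hδ : IsUnit δ) (hδN : Algebra.norm F δ = 1) (hξ : ξ ≠ 0) {w : F}
    (h : δ * ξ ^ 3 = algebraMap F K w) : ∃ κ : Kˣ, (κ : K) ^ 3 = δ := by
  set n := Algebra.norm F ξ
  have hnw : n ^ 3 = w ^ 2 := by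
    simpa [hδN, hK, Algebra.norm_algebraMap] using congrArg (Algebra.norm F) h
  have hw : w ≠ 0 := by
    rintro rfl
    rw [map_zero, hδ.mul_right_eq_zero] at h
    exact hξ (eq_zero_of_pow_eq_zero h)
  have hn : n ≠ 0 := by
    rintro hn
    rw [hn, zero_pow three_ne_zero, eq_comm, pow_eq_zero_iff two_ne_zero] at hnw
    exact hw hnw
  obtain ⟨ξ, rfl⟩ := Algebra.isUnit_of_isUnit_norm (isUnit_iff_ne_zero.mpr hn)
  have hc : (w / n) ^ 3 = w := by
    rw [div_pow, div_eq_iff (pow_ne_zero 3 hn), hnw]; ring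
  refine ⟨Units.map (algebraMap F K) (Units.mk0 (w / n) (div_ne_zero hw hn)) * ξ⁻¹, ?_⟩
  rw [Units.val_mul, mul_pow, Units.coe_map, Units.val_mk0, MonoidHom.coe_coe, ← map_pow, hc,
    ← h, mul_assoc, ← mul_pow, Units.mul_inv, one_pow, mul_one]

section

open Polynomial

namespace AdjoinRoot

section CommRing

variable {R : Type*} [CommRing R] (D : R)

local notation "K" => AdjoinRoot (X ^ 2 - C D)
local notation "τ" => root (X ^ 2 - C D)
local notation "ι" => algebraMap R K

theorem root_X_pow_two_sub_C_sq : τ ^ 2 = ι D := by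
  have h : mk (X ^ 2 - C D) (X ^ 2 - C D) = 0 := mk_self
  rwa [map_sub, map_pow, mk_X, mk_C, sub_eq_zero] at h

theorem algebraMap_add_mul_root_mul (a b c d : R) :
    (ι a + ι b * τ) * (ι c + ι d * τ) = ι (a * c + D * b * d) + ι (a * d + b * c) * τ := by
  simp only [map_add, map_mul]
  linear_combination ι b * ι d * root_X_pow_two_sub_C_sq D

theorem algebraMap_add_mul_root_mul_pow_three (u v x y : R) :
    (ι u + ι v * τ) * (ι x + ι y * τ) ^ 3 =
      ι ((⟨u, v * D, u * D, v * D ^ 2⟩ : BinaryCubic R).eval x y) +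
        ι ((⟨v, u, v * D, u * D⟩ : BinaryCubic R).eval x y) * τ := by
  simp only [BinaryCubic.eval, map_add, map_mul, map_pow, map_ofNat]
  linear_combination ((ι u + ι v * τ) * (3 * ι x * ι y ^ 2 + ι y ^ 3 * τ)
    + ι v * (3 * ι x ^ 2 * ι y + ι y ^ 3 * ι D)) * root_X_pow_two_sub_C_sq D

variable [Nontrivial R]

theorem finrank_X_pow_two_sub_C : Module.finrank R K = 2 := by
  rw [(powerBasis' (monic_X_pow_sub_C D two_ne_zero)).finrank, powerBasis'_dim,
    natDegree_X_pow_sub_C]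

noncomputable def basisXPowTwoSubC : Module.Basis (Fin 2) R K :=
  (powerBasis' (monic_X_pow_sub_C D two_ne_zero)).basis.reindex
    (finCongr (by simp [powerBasis'_dim]))

theorem basisXPowTwoSubC_apply (i : Fin 2) : basisXPowTwoSubC D i = τ ^ (i : ℕ) := by
  simp [basisXPowTwoSubC, powerBasis'_gen]

theorem basisXPowTwoSubC_repr (a b : R) :
    (basisXPowTwoSubC D).repr (ι a + ι b * τ) = ![a, b] := by
  have h : ι a + ι b * τ = a • basisXPowTwoSubC D 0 + b • basisXPowTwoSubC D 1 := by
    simp [basisXPowTwoSubC_apply, Algebra.smul_def]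
  rw [h, map_add, map_smul, map_smul, Module.Basis.repr_self, Module.Basis.repr_self]
  ext i
  fin_cases i <;> simp

theorem algebraMap_add_mul_root_eq_zero_iff {a b : R} : ι a + ι b * τ = 0 ↔ a = 0 ∧ b = 0 := by
  constructor
  · intro h
    have hr := basisXPowTwoSubC_repr D a b
    rw [h, map_zero] at hr
    exact ⟨(congrFun hr 0).symm, (congrFun hr 1).symm⟩
  · rintro ⟨rfl, rfl⟩
    simp

theorem exists_eq_algebraMap_add_mul_root (ξ : K) : ∃ a b : R, ξ = ι a + ι b * τ := by
  refine ⟨(basisXPowTwoSubC D).repr ξ 0, (basisXPowTwoSubC D).repr ξ 1, ?_⟩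
  conv_lhs => rw [← (basisXPowTwoSubC D).sum_repr ξ]
  simp [Fin.sum_univ_two, basisXPowTwoSubC_apply, Algebra.smul_def]

end CommRing

section Field

variable {F : Type*} [Field F] {D : F}

theorem isReduced_X_pow_two_sub_C (h2 : (2 : F) ≠ 0) (hD : D ≠ 0) :
    IsReduced (AdjoinRoot (X ^ 2 - C D)) := by
  refine (isReduced_iff_pow_one_lt 2 one_lt_two).2 fun ξ hξ => ?_
  obtain ⟨a, b, rfl⟩ := exists_eq_algebraMap_add_mul_root D ξ
  rw [(sq _).trans (algebraMap_add_mul_root_mul D a b a b),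
    algebraMap_add_mul_root_eq_zero_iff] at hξ
  rw [algebraMap_add_mul_root_eq_zero_iff]
  obtain ⟨hre, him⟩ := hξ
  have hab : 2 * (a * b) = 0 := by linear_combination him
  rcases mul_eq_zero.mp ((mul_eq_zero.mp hab).resolve_left h2) with rfl | rfl
  · simpa [hD] using hre
  · simpa using hre

end Field

end AdjoinRoot

end

open Polynomial in
theorem cube_of_reducible_trace_form_general {F : Type*} [Field F]
    (h2 : (2 : F) ≠ 0) (D : F) (hD : D ≠ 0) (u v : F) :
    let K := AdjoinRoot (X ^ 2 - C D)
    let τ : K := AdjoinRoot.root (X ^ 2 - C D)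
    let δ : K := algebraMap F K u + algebraMap F K v * τ
    IsUnit δ → Algebra.norm F δ = 1 →
      BinaryCubic.Reducible (⟨v, u, v * D, u * D⟩ : BinaryCubic F) →
      ∃ κ : Kˣ, (κ : K) ^ 3 = δ := by
  intro K τ δ hδ hδN hred
  obtain ⟨x, y, hxy, hroot⟩ := hred.exists_eval_eq_zero
  have := AdjoinRoot.isReduced_X_pow_two_sub_C h2 hD
  have := (monic_X_pow_sub_C D two_ne_zero).finite_adjoinRoot
  have hξ : algebraMap F K x + algebraMap F K y * τ ≠ 0 := by
    rwa [Ne, AdjoinRoot.algebraMap_add_mul_root_eq_zero_iff, ← Prod.mk_eq_zero]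
  have hcube := AdjoinRoot.algebraMap_add_mul_root_mul_pow_three D u v x y
  rw [hroot, map_zero, zero_mul, add_zero] at hcube
  exact exists_cube_eq_of_mul_cube_eq_algebraMap (AdjoinRoot.finrank_X_pow_two_sub_C D) hδ hδN hξ
    hcube

open Polynomial in
/-- Let `F` be a field of characteristic ≠ 2, 3, `D ∈ F*`, `K = F[t]/(t² − D)`
with `τ` the image of `t`, and let `δ = u + vτ ∈ K*` with `N_{K/F}(δ) = 1`. If the binary cubic
form `v·x³ + 3u·x²y + 3vD·xy² + uD·y³` is reducible over `F`, then `δ` is a cube in `K*`. -/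
theorem cube_of_reducible_trace_form {F : Type*} [Field F]
    (h2 : (2 : F) ≠ 0) (h3 : (3 : F) ≠ 0) (D : F) (hD : D ≠ 0) (u v : F) :
    let K := AdjoinRoot (X ^ 2 - C D)
    let τ : K := AdjoinRoot.root (X ^ 2 - C D)
    let δ : K := algebraMap F K u + algebraMap F K v * τ
    IsUnit δ → Algebra.norm F δ = 1 →
      BinaryCubic.Reducible (⟨v, u, v * D, u * D⟩ : BinaryCubic F) →
      ∃ κ : Kˣ, (κ : K) ^ 3 = δ :=
  cube_of_reducible_trace_form_general h2 D hD u v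
end
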